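/- Let n ≥ 1 and a, b : Fin n → ℝ. For s ≠ 0 set A(s) := N(s·a_0, s⁻¹·b_0) · N(s·a_1, s⁻¹·b_1) ⋯ N(s·a_{n−1}, s⁻¹·b_{n−1}), and let F(s) := tr A(s) and G(s) := tr adj A(s), where adj denotes the adjugate matrix (since det A(s) = 1, adj A(s) = A(s)⁻¹). Suppose A(1) is the identity matrix (i.e. the twisted n-gon is closed). Then F(1) = 3, G(1) = 3, F′(1) = 0, G′(1) = 0, and F″(1) = G″(1). (These five identities are equivalent to the paper's relations for closed polygons: ∑_j I_j = ∑_j J_j = 3, ∑_j w(j) I_j = ∑_j w(j) J_j = 0, and ∑_j w(j)² (I_j − J_j) = 0, where I_j and J_j are the weighted-homogeneous components of the traces of the monodromy and of its inverse, of weights w(j) and −w(j), since F(s) = ∑_j s^{w(j)} I_j and G(s) = ∑_j s^{−w(j)} J_j.) -/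

import Mathlib

/-! Put `M = A - 1`, so that `M(1) = 0`. Expanding `det (1 + M) = 1` for a `3 × 3` matrix gives
`F = 3 - tr adj M - det M` and `G = F - det M`. Every term of `tr adj M` (resp. `det M`) is a
product of two (resp. three) entries of `M`, all vanishing at `s = 1`, so by the Leibniz rule the
derivatives of `tr adj M` of order `< 2`, and those of `det M` of order `< 3`, vanish at `s = 1`. -/

/-- The matrix `N(α, β)` with rows `(0,0,1)`, `(1,0,β)`, `(0,1,α)`. -/
noncomputable def Nmat (α β : ℝ) : Matrix (Fin 3) (Fin 3) ℝ :=
  !![0, 0, 1; 1, 0, β; 0, 1, α]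

open Finset Matrix

theorem Matrix.trace_adjugate_fin_succ {R : Type*} [CommRing R] {m : ℕ}
    (A : Matrix (Fin (m + 1)) (Fin (m + 1)) R) :
    A.adjugate.trace = ∑ i : Fin (m + 1), (A.submatrix i.succAbove i.succAbove).det := by
  simp [trace, adjugate_fin_succ_eq_det_submatrix, ← two_mul, pow_mul]

theorem Matrix.trace_fin_three_of_det_eq_one {R : Type*} [CommRing R]
    {A : Matrix (Fin 3) (Fin 3) R} (hA : A.det = 1) :
    A.trace = 3 - ((A - 1).adjugate.trace + (A - 1).det) := by
  simp only [det_fin_three, trace_fin_three, adjugate_fin_three, sub_apply, one_apply_eq, ne_eq,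
    Fin.reduceEq, not_false_eq_true, one_apply_ne, sub_zero, zero_ne_one, one_ne_zero, of_apply,
    cons_val', cons_val_zero, cons_val_fin_one, cons_val_one, cons_val] at *
  linear_combination hA

theorem Matrix.trace_adjugate_fin_three_of_det_eq_one {R : Type*} [CommRing R]
    {A : Matrix (Fin 3) (Fin 3) R} (hA : A.det = 1) :
    A.adjugate.trace = A.trace - (A - 1).det := by
  simp only [det_fin_three, trace_fin_three, adjugate_fin_three, sub_apply, one_apply_eq, ne_eq,
    Fin.reduceEq, not_false_eq_true, one_apply_ne, sub_zero, zero_ne_one, one_ne_zero, of_apply,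
    cons_val', cons_val_zero, cons_val_fin_one, cons_val_one, cons_val] at *
  linear_combination hA

section MatrixCurves

variable {𝕜 𝔸 : Type*} [NontriviallyNormedField 𝕜] [NormedCommRing 𝔸] [NormedAlgebra 𝕜 𝔸]
  {x : 𝕜} {k : ℕ}

theorem iteratedDeriv_mul_eq_zero {f g : 𝕜 → 𝔸} (hf : ContDiffAt 𝕜 k f x)
    (hg : ContDiffAt 𝕜 k g x) (hfx : f x = 0) (hg0 : ∀ j < k, iteratedDeriv j g x = 0) :
    iteratedDeriv k (f * g) x = 0 := by
  rw [iteratedDeriv_mul hf hg]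
  refine Finset.sum_eq_zero fun i hi => ?_
  rcases i with _ | i
  · simp [hfx]
  · rw [hg0 (k - (i + 1)) (by grind), mul_zero]

theorem iteratedDeriv_finset_prod_eq_zero {ι : Type*} {s : Finset ι} {f : ι → 𝕜 → 𝔸}
    (hf : ∀ i ∈ s, ContDiffAt 𝕜 k (f i) x) (hf0 : ∀ i ∈ s, f i x = 0) (hk : k < #s) :
    iteratedDeriv k (fun y => ∏ i ∈ s, f i y) x = 0 := by
  classical
  induction s using Finset.induction_on generalizing k with
  | empty => simp at hk
  | insert a t ha ih =>
    simp only [Finset.prod_insert ha]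
    rw [Finset.card_insert_of_notMem ha] at hk
    refine iteratedDeriv_mul_eq_zero (g := fun y => ∏ i ∈ t, f i y) (hf a (mem_insert_self a t))
      (contDiffAt_prod fun i hi => hf i (mem_insert_of_mem hi)) (hf0 a (mem_insert_self a t))
      fun j hj => ih (fun i hi => (hf i (mem_insert_of_mem hi)).of_le (by exact_mod_cast hj.le))
        (fun i hi => hf0 i (mem_insert_of_mem hi)) (by omega)

variable {ι : Type*} [Fintype ι] {n : WithTop ℕ∞}

theorem contDiffAt_trace {M : 𝕜 → Matrix ι ι 𝔸}
    (hM : ∀ i j, ContDiffAt 𝕜 n (fun y => M y i j) x) :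
    ContDiffAt 𝕜 n (fun y => (M y).trace) x :=
  ContDiffAt.sum fun i _ => hM i i

variable [DecidableEq ι]

theorem contDiffAt_det {M : 𝕜 → Matrix ι ι 𝔸}
    (hM : ∀ i j, ContDiffAt 𝕜 n (fun y => M y i j) x) :
    ContDiffAt 𝕜 n (fun y => (M y).det) x := by
  simp only [det_apply]
  exact ContDiffAt.sum fun σ _ => (contDiffAt_prod fun i _ => hM (σ i) i).const_smul _

theorem contDiffAt_trace_adjugate {m : ℕ} {M : 𝕜 → Matrix (Fin (m + 1)) (Fin (m + 1)) 𝔸}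
    (hM : ∀ i j, ContDiffAt 𝕜 n (fun y => M y i j) x) :
    ContDiffAt 𝕜 n (fun y => (M y).adjugate.trace) x := by
  simp only [trace_adjugate_fin_succ]
  exact ContDiffAt.sum fun i _ => contDiffAt_det fun a b => hM _ _

theorem contDiffAt_list_prod_apply {β : Type*} {l : List β} {N : β → 𝕜 → Matrix ι ι 𝔸}
    (hN : ∀ b ∈ l, ∀ i j, ContDiffAt 𝕜 n (fun y => N b y i j) x) (i j : ι) :
    ContDiffAt 𝕜 n (fun y => (l.map fun b => N b y).prod i j) x := by
  induction l generalizing i j with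
  | nil => simpa [one_apply] using contDiffAt_const
  | cons b l ih =>
    simp only [List.map_cons, List.prod_cons, mul_apply]
    exact ContDiffAt.sum fun m _ => (hN b (by simp) i m).mul
      (ih (fun b' hb' => hN b' (List.mem_cons_of_mem _ hb')) m j)

theorem iteratedDeriv_det_eq_zero {M : 𝕜 → Matrix ι ι 𝔸}
    (hM : ∀ i j, ContDiffAt 𝕜 k (fun y => M y i j) x) (hM0 : M x = 0) (hk : k < Fintype.card ι) :
    iteratedDeriv k (fun y => (M y).det) x = 0 := by
  simp only [det_apply]
  rw [iteratedDeriv_fun_sum fun σ _ => (contDiffAt_prod fun i _ => hM (σ i) i).const_smul _]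
  refine Finset.sum_eq_zero fun σ _ => ?_
  rw [iteratedDeriv_fun_const_smul (contDiffAt_prod fun i _ => hM (σ i) i),
    iteratedDeriv_finset_prod_eq_zero (fun i _ => hM (σ i) i) (fun i _ => by simp [hM0]) hk,
    smul_zero]

theorem iteratedDeriv_trace_adjugate_eq_zero {m : ℕ}
    {M : 𝕜 → Matrix (Fin (m + 1)) (Fin (m + 1)) 𝔸}
    (hM : ∀ i j, ContDiffAt 𝕜 k (fun y => M y i j) x) (hM0 : M x = 0) (hk : k < m) :
    iteratedDeriv k (fun y => (M y).adjugate.trace) x = 0 := by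
  simp only [trace_adjugate_fin_succ]
  rw [iteratedDeriv_fun_sum fun i _ =>
    contDiffAt_det (M := fun y => (M y).submatrix i.succAbove i.succAbove) fun a b => hM _ _]
  exact Finset.sum_eq_zero fun i _ =>
    iteratedDeriv_det_eq_zero (fun a b => hM _ _) (by simp [hM0]) (by simpa using hk)

theorem deriv_trace_eq_zero_of_det_eq_one {A : 𝕜 → Matrix (Fin 3) (Fin 3) 𝔸}
    (hA : ∀ i j, ContDiffAt 𝕜 1 (fun y => A y i j) x) (hdet : ∀ y, (A y).det = 1) (hx : A x = 1) :
    deriv (fun y => (A y).trace) x = 0 := by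
  have hM (i j : Fin 3) : ContDiffAt 𝕜 1 (fun y => (A y - 1) i j) x :=
    (hA i j).sub contDiffAt_const
  have hM0 : A x - 1 = 0 := sub_eq_zero.mpr hx
  simp only [trace_fin_three_of_det_eq_one (hdet _)]
  rw [← iteratedDeriv_one, iteratedDeriv_const_sub one_pos, iteratedDeriv_neg,
    iteratedDeriv_fun_add (contDiffAt_trace_adjugate hM) (contDiffAt_det hM),
    iteratedDeriv_trace_adjugate_eq_zero (m := 2) hM hM0 one_lt_two,
    iteratedDeriv_det_eq_zero hM hM0 (by simp), add_zero, neg_zero]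

theorem iteratedDeriv_trace_adjugate_eq_of_det_eq_one {A : 𝕜 → Matrix (Fin 3) (Fin 3) 𝔸}
    (hA : ∀ i j, ContDiffAt 𝕜 k (fun y => A y i j) x) (hdet : ∀ y, (A y).det = 1) (hx : A x = 1)
    (hk : k < 3) :
    iteratedDeriv k (fun y => (A y).adjugate.trace) x =
      iteratedDeriv k (fun y => (A y).trace) x := by
  have hM (i j : Fin 3) : ContDiffAt 𝕜 k (fun y => (A y - 1) i j) x :=
    (hA i j).sub contDiffAt_const
  simp only [trace_adjugate_fin_three_of_det_eq_one (hdet _)]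
  rw [iteratedDeriv_fun_sub (contDiffAt_trace hA) (contDiffAt_det hM),
    iteratedDeriv_det_eq_zero hM (sub_eq_zero.mpr hx) (by simpa using hk), sub_zero]

end MatrixCurves

theorem det_Nmat (α β : ℝ) : (Nmat α β).det = 1 := by
  simp [Nmat, det_fin_three]

theorem contDiffAt_Nmat_apply {n : WithTop ℕ∞} {c d s : ℝ} (hs : s ≠ 0) (i j : Fin 3) :
    ContDiffAt ℝ n (fun t => Nmat (t * c) (t⁻¹ * d) i j) s := by
  fin_cases i <;> fin_cases j <;> simp [Nmat] <;> fun_prop (disch := exact hs)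

theorem stmt_19 (n : ℕ) (a b : Fin n → ℝ)
    (A : ℝ → Matrix (Fin 3) (Fin 3) ℝ)
    (hA : ∀ s : ℝ,
      A s = (((List.finRange n).map fun i => Nmat (s * a i) (s⁻¹ * b i)).prod))
    (F G : ℝ → ℝ)
    (hF : ∀ s, F s = (A s).trace)
    (hG : ∀ s, G s = (A s).adjugate.trace)
    (hclosed : A 1 = 1) :
    F 1 = 3 ∧ G 1 = 3 ∧ deriv F 1 = 0 ∧ deriv G 1 = 0 ∧
      deriv (deriv F) 1 = deriv (deriv G) 1 := by
  have hA' (i j : Fin 3) : ContDiffAt ℝ 2 (fun s => A s i j) 1 := by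
    simpa only [hA] using contDiffAt_list_prod_apply (l := List.finRange n)
      (N := fun k s => Nmat (s * a k) (s⁻¹ * b k))
      (fun k _ => contDiffAt_Nmat_apply one_ne_zero) i j
  have hdet (s : ℝ) : (A s).det = 1 := by
    rw [hA, ← coe_detMonoidHom, map_list_prod]
    exact List.prod_eq_one (by simp [det_Nmat])
  have hGF (k : ℕ) (hk : k ≤ 2) : iteratedDeriv k G 1 = iteratedDeriv k F 1 := by
    rw [funext hF, funext hG]
    exact iteratedDeriv_trace_adjugate_eq_of_det_eq_one
      (fun i j => (hA' i j).of_le (by exact_mod_cast hk)) hdet hclosed (by omega)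
  have hF' : deriv F 1 = 0 := by
    rw [funext hF]
    exact deriv_trace_eq_zero_of_det_eq_one (fun i j => (hA' i j).of_le one_le_two) hdet hclosed
  refine ⟨by simp [hF, hclosed], by simp [hG, hclosed], hF', ?_, ?_⟩
  · rw [← iteratedDeriv_one, hGF 1 one_le_two, iteratedDeriv_one, hF']
  · simpa only [iteratedDeriv_succ', iteratedDeriv_zero] using (hGF 2 le_rfl).symm
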